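/- For every real number α with -1/√2 < α < 0, there exists a unique complex number η with nonnegative real part and nonnegative imaginary part satisfying 1/√(1/2 - 2iη) + 1/√(1/2 + 2iη) = -2/α. -/

import Mathlib

open Complex

/-- Principal branch of the complex square root. -/
noncomputable def sqrtC (z : ℂ) : ℂ := z ^ ((1 : ℂ)/2)

/-!
Put `c = -2/α`, so that `c > 2√2`, and `a = √(1/2 - 2iη)`, `b = √(1/2 + 2iη)`. Then
`a² + b² = 1` and the equation says `a + b = c·ab`, so `p = ab` solves `c²p² = 1 + 2p`.
Since `Re a > 0` and `Re b ≥ 0`, `ab` is not a negative real, which excludes the negative root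
and forces `ab = s := (1 + √(1 + c²))/c²`. Squaring, `1/4 + 4η² = s²`, and `Im η ≥ 0` leaves
`η = i·√(1/4 - s²)/2`. Conversely this `η` is a solution, because `s < 1/2` (equivalently `c² > 8`)
makes both radicands positive reals.
-/

lemma sqrtC_sq (z : ℂ) : sqrtC z ^ 2 = z := by
  rw [sqrtC, one_div]
  exact_mod_cast cpow_nat_inv_pow z two_ne_zero

lemma sqrtC_re (z : ℂ) : (sqrtC z).re = √((‖z‖ + z.re) / 2) := by
  rw [sqrtC, one_div, cpow_inv_two_re]

lemma sqrtC_re_nonneg (z : ℂ) : 0 ≤ (sqrtC z).re := by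
  rw [sqrtC_re]; positivity

lemma sqrtC_re_pos {z : ℂ} (hz : 0 < z.re) : 0 < (sqrtC z).re := by
  rw [sqrtC_re]
  have := re_le_norm z
  apply Real.sqrt_pos.mpr
  linarith

lemma sqrtC_ofReal {x : ℝ} (hx : 0 ≤ x) : sqrtC x = (√x : ℝ) := by
  rw [sqrtC, Real.sqrt_eq_rpow, ofReal_cpow hx]
  norm_num

lemma re_mul_nonneg_of_im_mul_eq_zero {a b : ℂ} (ha : 0 < a.re) (hb : 0 ≤ b.re)
    (him : (a * b).im = 0) : 0 ≤ (a * b).re := by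
  have key : a.re * (a * b).re + a.im * (a * b).im = normSq a * b.re := by
    simp only [mul_re, mul_im, normSq_apply]; ring
  rw [him, mul_zero, add_zero] at key
  exact nonneg_of_mul_nonneg_right (key ▸ mul_nonneg (normSq_nonneg a) hb) ha

lemma eq_of_sq_eq_of_im_nonneg {z w : ℂ} (h : z ^ 2 = w ^ 2) (hz : 0 ≤ z.im) (hw : 0 < w.im) :
    z = w := by
  rcases sq_eq_sq_iff_eq_or_eq_neg.mp h with h | h
  · exact h
  · rw [h, neg_im] at hz; linarith

noncomputable def posRoot (c : ℝ) : ℝ := (1 + √(1 + c ^ 2)) / c ^ 2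

noncomputable def etaIm (c : ℝ) : ℝ := √(1 / 4 - posRoot c ^ 2) / 2

section
variable {c : ℝ}

lemma posRoot_pos (hc : c ≠ 0) : 0 < posRoot c := by
  unfold posRoot; positivity

lemma sq_mul_posRoot_sq (hc : c ≠ 0) : c ^ 2 * posRoot c ^ 2 = 1 + 2 * posRoot c := by
  have hd := Real.sq_sqrt (by positivity : (0 : ℝ) ≤ 1 + c ^ 2)
  unfold posRoot
  field_simp
  linear_combination hd

-- `2 / c ^ 2 - posRoot c` is the other root of `c²p² = 1 + 2p`.
lemma two_div_sq_sub_posRoot_neg (hc : c ≠ 0) : 2 / c ^ 2 - posRoot c < 0 := by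
  have hd : 1 < √(1 + c ^ 2) := by
    have : 0 < c ^ 2 := by positivity
    rw [Real.lt_sqrt zero_le_one]; linarith
  rw [posRoot, div_sub_div_same]
  exact div_neg_of_neg_of_pos (by linarith) (by positivity)

lemma sq_posRoot_lt_quarter (hc : 8 < c ^ 2) : posRoot c ^ 2 < 1 / 4 := by
  have hd := Real.sq_sqrt (by positivity : (0 : ℝ) ≤ 1 + c ^ 2)
  have hd0 := Real.sqrt_nonneg (1 + c ^ 2)
  have hs := posRoot_pos (c := c) (by rintro rfl; norm_num at hc)
  have hs2 : posRoot c < 1 / 2 := by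
    rw [posRoot, div_lt_iff₀ (by positivity)]
    nlinarith
  nlinarith

lemma etaIm_pos (hc : 8 < c ^ 2) : 0 < etaIm c :=
  div_pos (Real.sqrt_pos.mpr (by linarith [sq_posRoot_lt_quarter hc])) two_pos

lemma four_mul_etaIm_sq (hc : 8 < c ^ 2) : 4 * etaIm c ^ 2 = 1 / 4 - posRoot c ^ 2 := by
  rw [etaIm, div_pow, Real.sq_sqrt (by linarith [sq_posRoot_lt_quarter hc])]
  ring

lemma eq_posRoot_of_sq_mul_sq_eq (hc : c ≠ 0) {p : ℂ} (hp : (c : ℂ) ^ 2 * p ^ 2 = 1 + 2 * p)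
    (hnonneg : p.im = 0 → 0 ≤ p.re) : p = posRoot c := by
  have hs : ((c ^ 2 * posRoot c ^ 2 : ℝ) : ℂ) = ((1 + 2 * posRoot c : ℝ) : ℂ) :=
    congrArg _ (sq_mul_posRoot_sq hc)
  push_cast at hs
  have hfac : (p - posRoot c) * ((c : ℂ) ^ 2 * (p - ((2 / c ^ 2 - posRoot c : ℝ) : ℂ))) = 0 := by
    have : (c : ℂ) ≠ 0 := ofReal_ne_zero.mpr hc
    push_cast
    field_simp
    linear_combination hp - hs
  rcases mul_eq_zero.mp hfac with h | h
  · exact sub_eq_zero.mp h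
  · have hp' := sub_eq_zero.mp ((mul_eq_zero.mp h).resolve_left (by exact_mod_cast pow_ne_zero 2 hc))
    have := hnonneg (by rw [hp', ofReal_im])
    rw [hp', ofReal_re] at this
    linarith [two_div_sq_sub_posRoot_neg hc]

lemma mul_eq_posRoot (hc : c ≠ 0) {a b : ℂ} (ha : 0 < a.re) (hb : 0 ≤ b.re)
    (hab : a ^ 2 + b ^ 2 = 1) (h : a + b = c * (a * b)) : a * b = posRoot c := by
  refine eq_posRoot_of_sq_mul_sq_eq hc ?_ (re_mul_nonneg_of_im_mul_eq_zero ha hb)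
  linear_combination hab - congrArg (· ^ 2) h

lemma eq_I_mul_etaIm (hc : 8 < c ^ 2) {η : ℂ} (hη : 0 ≤ η.im)
    (h : 1 / sqrtC (1 / 2 - 2 * I * η) + 1 / sqrtC (1 / 2 + 2 * I * η) = c) :
    η = I * etaIm c := by
  have hc0 : c ≠ 0 := by rintro rfl; norm_num at hc
  set a := sqrtC (1 / 2 - 2 * I * η)
  set b := sqrtC (1 / 2 + 2 * I * η)
  have ha2 : a ^ 2 = 1 / 2 - 2 * I * η := sqrtC_sq _
  have hb2 : b ^ 2 = 1 / 2 + 2 * I * η := sqrtC_sq _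
  have ha : 0 < a.re := sqrtC_re_pos (by simp; linarith)
  have ha0 : a ≠ 0 := fun h0 => by simp [h0] at ha
  have hb0 : b ≠ 0 := by
    rintro hb0
    rw [hb0, div_zero, add_zero] at h
    rw [hb0] at hb2
    have ha1 : a ^ 2 = 1 := by linear_combination ha2 + hb2
    have : (c : ℂ) ^ 2 = 1 := by rw [← h, div_pow, ha1]; norm_num
    norm_cast at this
    linarith
  have hab : a * b = posRoot c := by
    refine mul_eq_posRoot hc0 ha (sqrtC_re_nonneg _) (by rw [ha2, hb2]; ring) ?_
    field_simp at h
    linear_combination h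
  refine eq_of_sq_eq_of_im_nonneg ?_ hη (by simpa using etaIm_pos hc)
  have hsq : ((4 * etaIm c ^ 2 : ℝ) : ℂ) = ((1 / 4 - posRoot c ^ 2 : ℝ) : ℂ) :=
    congrArg _ (four_mul_etaIm_sq hc)
  push_cast at hsq
  rw [← hab, mul_pow, ha2, hb2] at hsq
  linear_combination hsq / 4 + (η ^ 2 - (etaIm c : ℂ) ^ 2) * I_sq

lemma add_eq_mul_posRoot (hc : 0 < c) {u v : ℝ} (hu : 0 ≤ u) (hv : 0 ≤ v)
    (huv : u ^ 2 + v ^ 2 = 1) (h : u * v = posRoot c) : u + v = c * posRoot c := by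
  have hs := posRoot_pos hc.ne'
  refine (pow_left_inj₀ (by positivity) (by positivity) two_ne_zero).mp ?_
  linear_combination huv + 2 * h - sq_mul_posRoot_sq hc.ne'

lemma inv_sqrtC_add_inv_sqrtC_at_I_mul_etaIm (hc0 : 0 < c) (hc : 8 < c ^ 2) :
    1 / sqrtC (1 / 2 - 2 * I * (I * etaIm c)) + 1 / sqrtC (1 / 2 + 2 * I * (I * etaIm c)) = c := by
  set t := etaIm c
  have ht := etaIm_pos hc
  have hs := posRoot_pos hc0.ne'
  have hP : 0 < 1 / 2 + 2 * t := by linarith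
  have hQ : 0 < 1 / 2 - 2 * t := by nlinarith [four_mul_etaIm_sq hc]
  have e1 : 1 / 2 - 2 * I * (I * t) = ((1 / 2 + 2 * t : ℝ) : ℂ) := by
    push_cast; linear_combination (-2 * (t : ℂ)) * I_mul_I
  have e2 : 1 / 2 + 2 * I * (I * t) = ((1 / 2 - 2 * t : ℝ) : ℂ) := by
    push_cast; linear_combination (2 * (t : ℂ)) * I_mul_I
  rw [e1, e2, sqrtC_ofReal hP.le, sqrtC_ofReal hQ.le]
  norm_cast
  have hmul : √(1 / 2 + 2 * t) * √(1 / 2 - 2 * t) = posRoot c := by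
    rw [← Real.sqrt_mul hP.le, ← Real.sqrt_sq hs.le]
    congr 1
    linear_combination -four_mul_etaIm_sq hc
  have hadd := add_eq_mul_posRoot hc0 (Real.sqrt_nonneg _) (Real.sqrt_nonneg _)
    (by rw [Real.sq_sqrt hP.le, Real.sq_sqrt hQ.le]; ring) hmul
  rw [div_add_div _ _ (Real.sqrt_pos.mpr hP).ne' (Real.sqrt_pos.mpr hQ).ne', hmul,
    div_eq_iff hs.ne']
  linear_combination hadd

end

lemma eight_lt_sq_neg_two_div {α : ℝ} (hα₁ : -1 / √2 < α) (hα₂ : α < 0) : 8 < (-2 / α) ^ 2 := by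
  have h2 := Real.sq_sqrt (zero_le_two : (0 : ℝ) ≤ 2)
  have hα : -1 < α * √2 := by rwa [div_lt_iff₀ (by positivity)] at hα₁
  have hα2 : 2 * α ^ 2 < 1 := by nlinarith [Real.sqrt_pos.mpr (two_pos : (0 : ℝ) < 2)]
  rw [div_pow, lt_div_iff₀ (by nlinarith)]
  linarith

/-- For every real `α` with `-1/√2 < α < 0`, there is a unique complex `η` with
nonnegative real and imaginary parts satisfying
`1/√(1/2 - 2iη) + 1/√(1/2 + 2iη) = -2/α`. -/
theorem eta_exists_unique (α : ℝ) (hα₁ : -1 / Real.sqrt 2 < α) (hα₂ : α < 0) :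
    ∃! η : ℂ, 0 ≤ η.re ∧ 0 ≤ η.im ∧
      1 / sqrtC (1/2 - 2 * I * η) + 1 / sqrtC (1/2 + 2 * I * η) = -2 / (α : ℂ) := by
  set c := -2 / α with hc_def
  have hc0 : 0 < c := div_pos_of_neg_of_neg (by norm_num) hα₂
  have hc : 8 < c ^ 2 := eight_lt_sq_neg_two_div hα₁ hα₂
  have hcC : -2 / (α : ℂ) = c := by push_cast [hc_def]; rfl
  rw [hcC]
  refine ⟨I * etaIm c, ⟨by simp, by simp [(etaIm_pos hc).le],
    inv_sqrtC_add_inv_sqrtC_at_I_mul_etaIm hc0 hc⟩, ?_⟩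
  rintro η ⟨-, hη, h⟩
  exact eq_I_mul_etaIm hc hη h
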